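/- arXiv:0708.2861 — 7 statements merged into one kernel-verified Lean document; each statement's English description precedes it below -/
import Mathlib

section
/- Let V be a finite-dimensional real vector space, Π : V* → V antisymmetric, and W ⊆ V a subspace satisfying the pointwise Poisson–Dirac condition Π(W⁰) ∩ W = {0}. Then there exists a unique linear map Π̂ : W* → W such that for every ξ ∈ V* with Π(ξ) ∈ W one has Π̂(ξ|_W) = Π(ξ), where ξ|_W ∈ W* is the restriction of ξ to W. Moreover Π̂ is antisymmetric: α(Π̂ β) = −β(Π̂ α) for all α, β ∈ W*. -/
/-!
Let `S = P⁻¹(W) ⊆ V*`. By antisymmetry `S` is the annihilator of `P(W⁰)`, so the Poisson–Dirac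
condition `P(W⁰) ∩ W = 0` dualizes to `S + W⁰ = V*`: every covector on `W` is the restriction of
some `ξ ∈ S`. Two such `ξ` differ by an element of `W⁰` whose image lies in `P(W⁰) ∩ W = 0`, so
`P ξ` depends only on `ξ|_W`; this defines `Phat`, and its antisymmetry and uniqueness are
inherited through the surjection `S → W*`.
-/

open Module

namespace LinearMap

variable {R M N Q : Type*} [Ring R] [AddCommGroup M] [Module R M] [AddCommGroup N] [Module R N]
  [AddCommGroup Q] [Module R Q]

theorem existsUnique_comp_eq_of_surjective {r : M →ₗ[R] N} (hr : Function.Surjective r)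
    {f : M →ₗ[R] Q} (hker : ker r ≤ ker f) : ∃! g : N →ₗ[R] Q, g ∘ₗ r = f := by
  refine ⟨(ker r).liftQ f hker ∘ₗ (r.quotKerEquivOfSurjective hr).symm.toLinearMap, ?_,
    fun g hg => ?_⟩
  · ext m
    simp [quotKerEquivOfSurjective_symm_apply]
  · ext n
    obtain ⟨m, rfl⟩ := hr n
    simp [← comp_apply, hg, quotKerEquivOfSurjective_symm_apply]

end LinearMap

namespace PoissonDirac

variable {K V : Type*} [Field K] [AddCommGroup V] [Module K V] {P : Dual K V →ₗ[K] V}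
  {W : Submodule K V}

theorem comap_eq_dualAnnihilator_map (hanti : ∀ ξ η : Dual K V, ξ (P η) = - η (P ξ)) :
    W.comap P = (W.dualAnnihilator.map P).dualAnnihilator := by
  ext ξ
  rw [Submodule.mem_comap, ← Subspace.forall_mem_dualAnnihilator_apply_eq_zero_iff,
    Submodule.mem_dualAnnihilator]
  simp only [Submodule.mem_map, forall_exists_index, and_imp, forall_apply_eq_imp_iff₂]
  refine forall₂_congr fun η _ => ?_
  rw [hanti, neg_eq_zero]

theorem comap_sup_dualAnnihilator_eq_top [FiniteDimensional K V]
    (hanti : ∀ ξ η : Dual K V, ξ (P η) = - η (P ξ))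
    (hPD : W.dualAnnihilator.map P ⊓ W = ⊥) :
    W.comap P ⊔ W.dualAnnihilator = ⊤ := by
  rw [comap_eq_dualAnnihilator_map hanti, ← Subspace.dualAnnihilator_inf_eq, hPD,
    Submodule.dualAnnihilator_bot]

theorem surjective_dualRestrict_domRestrict_comap [FiniteDimensional K V]
    (hanti : ∀ ξ η : Dual K V, ξ (P η) = - η (P ξ))
    (hPD : W.dualAnnihilator.map P ⊓ W = ⊥) :
    Function.Surjective (W.dualRestrict.domRestrict (W.comap P)) := by
  intro α
  obtain ⟨ξ, rfl⟩ := Subspace.dualRestrict_surjective (W := W) α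
  have hξ : ξ ∈ W.comap P ⊔ W.dualAnnihilator := by
    rw [comap_sup_dualAnnihilator_eq_top hanti hPD]; trivial
  obtain ⟨σ, hσ, η, hη, rfl⟩ := Submodule.mem_sup.1 hξ
  refine ⟨⟨σ, hσ⟩, ?_⟩
  rw [← W.dualRestrict_ker_eq_dualAnnihilator] at hη
  simp [LinearMap.mem_ker.1 hη]

theorem ker_dualRestrict_domRestrict_comap_le (hPD : W.dualAnnihilator.map P ⊓ W = ⊥) :
    LinearMap.ker (W.dualRestrict.domRestrict (W.comap P)) ≤
      LinearMap.ker (P.restrict (p := W.comap P) (q := W) fun _ h => h) := by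
  rintro ⟨σ, hσ⟩ hker
  have hσW : σ ∈ W.dualAnnihilator := hker
  have hPσ : P σ ∈ W.dualAnnihilator.map P ⊓ W := ⟨⟨σ, hσW, rfl⟩, hσ⟩
  rw [hPD, Submodule.mem_bot] at hPσ
  simpa [LinearMap.restrict_apply] using hPσ

theorem existsUnique_comp_dualRestrict_eq [FiniteDimensional K V]
    (hanti : ∀ ξ η : Dual K V, ξ (P η) = - η (P ξ))
    (hPD : W.dualAnnihilator.map P ⊓ W = ⊥) :
    ∃! Q : Dual K W →ₗ[K] W,
      Q ∘ₗ W.dualRestrict.domRestrict (W.comap P) = P.restrict fun _ h => h :=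
  LinearMap.existsUnique_comp_eq_of_surjective (M := W.comap P)
    (surjective_dualRestrict_domRestrict_comap hanti hPD) (ker_dualRestrict_domRestrict_comap_le hPD)

theorem forall_apply_eq_iff_comp_eq (Q : Dual K W →ₗ[K] W) :
    (∀ (ξ : Dual K V) (h : P ξ ∈ W), Q (ξ ∘ₗ W.subtype) = ⟨P ξ, h⟩) ↔
      Q ∘ₗ W.dualRestrict.domRestrict (W.comap P) = P.restrict fun _ h => h := by
  refine ⟨fun hQ => LinearMap.ext fun ⟨ξ, hξ⟩ => hQ ξ hξ, fun hQ ξ hξ => ?_⟩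
  exact LinearMap.congr_fun hQ ⟨ξ, hξ⟩

theorem antisymm_of_comp_eq (hanti : ∀ ξ η : Dual K V, ξ (P η) = - η (P ξ))
    (hsurj : Function.Surjective (W.dualRestrict.domRestrict (W.comap P)))
    {Q : Dual K W →ₗ[K] W}
    (hQ : Q ∘ₗ W.dualRestrict.domRestrict (W.comap P) = P.restrict fun _ h => h)
    (α β : Dual K W) : α (Q β) = - β (Q α) := by
  have hQ' (σ : W.comap P) : (Q (W.dualRestrict σ) : V) = P σ :=
    congrArg Subtype.val (LinearMap.congr_fun hQ σ)
  obtain ⟨σ, rfl⟩ := hsurj α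
  obtain ⟨τ, rfl⟩ := hsurj β
  simp only [LinearMap.domRestrict_apply, Submodule.dualRestrict_apply, hQ']
  exact hanti σ τ

end PoissonDirac

open PoissonDirac in
/-- Let `V` be a finite-dimensional real vector space, `P : V* → V`
antisymmetric, and `W ⊆ V` a subspace satisfying the pointwise Poisson–Dirac condition
`P(W⁰) ∩ W = {0}`. Then there exists a unique linear map `Phat : W* → W` such that for
every `ξ ∈ V*` with `P ξ ∈ W` one has `Phat (ξ|_W) = P ξ`; moreover `Phat` is
antisymmetric. -/
theorem stmt_5 (V : Type*) [AddCommGroup V] [Module ℝ V] [FiniteDimensional ℝ V]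
    (P : Module.Dual ℝ V →ₗ[ℝ] V)
    (hanti : ∀ ξ η : Module.Dual ℝ V, ξ (P η) = - η (P ξ))
    (W : Submodule ℝ V)
    (hPD : Submodule.map P W.dualAnnihilator ⊓ W = ⊥) :
    ∃ Phat : Module.Dual ℝ W →ₗ[ℝ] W,
      (∀ (ξ : Module.Dual ℝ V) (h : P ξ ∈ W), Phat (ξ ∘ₗ W.subtype) = ⟨P ξ, h⟩) ∧
      (∀ α β : Module.Dual ℝ W, α (Phat β) = - β (Phat α)) ∧
      (∀ Phat' : Module.Dual ℝ W →ₗ[ℝ] W,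
        (∀ (ξ : Module.Dual ℝ V) (h : P ξ ∈ W), Phat' (ξ ∘ₗ W.subtype) = ⟨P ξ, h⟩) →
        Phat' = Phat) := by
  obtain ⟨Phat, hPhat, huniq⟩ := existsUnique_comp_dualRestrict_eq hanti hPD
  exact ⟨Phat, (forall_apply_eq_iff_comp_eq Phat).2 hPhat,
    antisymm_of_comp_eq hanti (surjective_dualRestrict_domRestrict_comap hanti hPD) hPhat,
    fun Phat' h => huniq Phat' ((forall_apply_eq_iff_comp_eq Phat').1 h)⟩
end

section
/- Let V be a finite-dimensional real vector space, D ⊆ V ⊕ V* a maximally isotropic subspace, and S ⊆ V ⊕ V* an isotropic subspace. Then D^S := (D ∩ S⊥) + S is maximally isotropic: (D^S)⊥ = D^S. -/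
/-- The orthogonal complement of a subspace `E ⊆ V ⊕ V*` with respect to the canonical
symmetric pairing `⟨(X,ξ),(Y,ζ)⟩ = ζ(X) + ξ(Y)`. -/
def perp {V : Type*} [AddCommGroup V] [Module ℝ V]
    (E : Submodule ℝ (V × Module.Dual ℝ V)) :
    Submodule ℝ (V × Module.Dual ℝ V) where
  carrier := {p | ∀ q ∈ E, q.2 p.1 + p.2 q.1 = 0}
  add_mem' := by
    intro a b ha hb q hq
    have h1 := ha q hq
    have h2 := hb q hq
    simp only [Prod.fst_add, Prod.snd_add, map_add, LinearMap.add_apply]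
    linarith
  zero_mem' := by
    intro q hq
    simp
  smul_mem' := by
    intro c a ha q hq
    have h := ha q hq
    simp only [Prod.smul_fst, Prod.smul_snd, map_smul, LinearMap.smul_apply, smul_eq_mul]
    rw [← mul_add, h, mul_zero]

/-!
Because `S ≤ S⊥`, the modular law rewrites `(D ⊓ S⊥) ⊔ S` as `(D ⊔ S) ⊓ S⊥`. Since `D⊥ = D`, the
first summand is `D ⊓ S⊥ = (D ⊔ S)⊥`, so by `E⊥⊥ = E` (the pairing is nondegenerate) its
complement is `((D ⊔ S)⊥ ⊔ S)⊥ = (D ⊔ S) ⊓ S⊥` as well.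
-/

section CanonicalPairing

variable {V : Type*} [AddCommGroup V] [Module ℝ V]

noncomputable def canonicalPairing : LinearMap.BilinForm ℝ (V × Module.Dual ℝ V) :=
  LinearMap.mk₂ ℝ (fun p q => p.2 q.1 + q.2 p.1)
    (by intro a b c; simp only [Prod.fst_add, Prod.snd_add, map_add, LinearMap.add_apply]; ring)
    (by intro r a b; simp only [Prod.smul_fst, Prod.smul_snd, map_smul, LinearMap.smul_apply,
      smul_eq_mul]; ring)
    (by intro a b c; simp only [Prod.fst_add, Prod.snd_add, map_add, LinearMap.add_apply]; ring)
    (by intro r a b; simp only [Prod.smul_fst, Prod.smul_snd, map_smul, LinearMap.smul_apply,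
      smul_eq_mul]; ring)

lemma canonicalPairing_apply (p q : V × Module.Dual ℝ V) :
    canonicalPairing p q = p.2 q.1 + q.2 p.1 := rfl

lemma canonicalPairing_isRefl : (canonicalPairing (V := V)).IsRefl := fun p q h => by
  rwa [canonicalPairing_apply, add_comm] at h

lemma canonicalPairing_nondegenerate : (canonicalPairing (V := V)).Nondegenerate := by
  refine (LinearMap.IsRefl.nondegenerate_iff_separatingLeft (B := canonicalPairing (V := V))
    canonicalPairing_isRefl).mpr fun p hp => ?_
  have h2 : p.2 = 0 := LinearMap.ext fun x => by simpa [canonicalPairing_apply] using hp (x, 0)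
  have h1 : p.1 = 0 := (Module.forall_dual_apply_eq_zero_iff ℝ p.1).mp fun φ => by
    simpa [canonicalPairing_apply, h2] using hp (0, φ)
  exact Prod.ext h1 h2

lemma perp_eq_orthogonal (E : Submodule ℝ (V × Module.Dual ℝ V)) :
    perp E = canonicalPairing.orthogonal E := rfl

lemma perp_sup (E F : Submodule ℝ (V × Module.Dual ℝ V)) :
    perp (E ⊔ F) = perp E ⊓ perp F := by
  refine le_antisymm (le_inf (fun p hp q hq => hp q (Submodule.mem_sup_left hq))
    (fun p hp q hq => hp q (Submodule.mem_sup_right hq))) ?_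
  rintro p ⟨hpE, hpF⟩ q hq
  obtain ⟨e, he, f, hf, rfl⟩ := Submodule.mem_sup.mp hq
  have := hpE e he
  have := hpF f hf
  simp only [Prod.fst_add, Prod.snd_add, map_add, LinearMap.add_apply]
  linarith

lemma perp_perp [FiniteDimensional ℝ V] (E : Submodule ℝ (V × Module.Dual ℝ V)) :
    perp (perp E) = E := by
  rw [perp_eq_orthogonal, perp_eq_orthogonal, LinearMap.BilinForm.orthogonal_orthogonal
    canonicalPairing_nondegenerate canonicalPairing_isRefl]

end CanonicalPairing

/-- Let `V` be a finite-dimensional real vector space,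
`D ⊆ V ⊕ V*` a maximally isotropic subspace, and `S ⊆ V ⊕ V*` an isotropic subspace.
Then `D^S := (D ∩ S⊥) + S` is maximally isotropic: `(D^S)⊥ = D^S`. -/
theorem stmt_6 {V : Type*} [AddCommGroup V] [Module ℝ V] [FiniteDimensional ℝ V]
    (D S : Submodule ℝ (V × Module.Dual ℝ V))
    (hD : perp D = D) (hS : S ≤ perp S) :
    perp ((D ⊓ perp S) ⊔ S) = (D ⊓ perp S) ⊔ S := by
  have modular : (D ⊓ perp S) ⊔ S = (D ⊔ S) ⊓ perp S := by
    rw [sup_comm D S, sup_inf_assoc_of_le D hS, sup_comm]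
  have inf_perp_eq : D ⊓ perp S = perp (D ⊔ S) := by
    rw [perp_sup, hD]
  rw [perp_sup, inf_perp_eq, perp_perp, ← inf_perp_eq, modular]
end

section
/- Let V be a finite-dimensional real vector space and D ⊆ V ⊕ V* an isotropic subspace. Let K = {X ∈ V | (X, 0) ∈ D} and let ρ₂(D) ⊆ V* be the image of D under the projection (X,ξ) ↦ ξ. If the annihilator of K in V* equals ρ₂(D), then dim D = dim V and D is maximally isotropic: D = D⊥. -/
/-- Rank-nullity for a subspace of a product: `dim D = dim ρ₂(D) + dim K` where
`ρ₂` is the second projection and `K = {x | (x,0) ∈ D}`. -/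
lemma finrank_eq_map_snd_add_comap_inl {𝕜 M N : Type*} [Field 𝕜]
    [AddCommGroup M] [Module 𝕜 M] [AddCommGroup N] [Module 𝕜 N]
    [FiniteDimensional 𝕜 M] [FiniteDimensional 𝕜 N] (D : Submodule 𝕜 (M × N)) :
    Module.finrank 𝕜 D =
      Module.finrank 𝕜 (Submodule.map (LinearMap.snd 𝕜 M N) D) +
      Module.finrank 𝕜 (Submodule.comap (LinearMap.inl 𝕜 M N) D) := by
  classical
  set f : D →ₗ[𝕜] N := (LinearMap.snd 𝕜 M N).domRestrict D with hf
  have hrn : Module.finrank 𝕜 (LinearMap.range f) + Module.finrank 𝕜 (LinearMap.ker f)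
      = Module.finrank 𝕜 D := LinearMap.finrank_range_add_finrank_ker f
  have hrange : LinearMap.range f = Submodule.map (LinearMap.snd 𝕜 M N) D := by
    simp [hf]
  have hkerK : Module.finrank 𝕜 (LinearMap.ker f)
      = Module.finrank 𝕜 (Submodule.comap (LinearMap.inl 𝕜 M N) D) := by
    let g : LinearMap.ker f →ₗ[𝕜] Submodule.comap (LinearMap.inl 𝕜 M N) D :=
      { toFun := fun d => ⟨d.1.1.1, by
          have hd : d.1.1.2 = 0 := LinearMap.mem_ker.mp d.2
          have hmem : d.1.1 ∈ D := d.1.2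
          have : (d.1.1.1, (0 : N)) ∈ D := by rw [← hd]; exact hmem
          simpa [Submodule.mem_comap, LinearMap.inl_apply] using this⟩
        map_add' := by intro a b; rfl
        map_smul' := by intro c a; rfl }
    refine LinearEquiv.finrank_eq (LinearEquiv.ofBijective g ⟨?_, ?_⟩)
    · intro a b hab
      have h1 : a.1.1.1 = b.1.1.1 := congrArg Subtype.val hab
      have ha2 : a.1.1.2 = 0 := LinearMap.mem_ker.mp a.2
      have hb2 : b.1.1.2 = 0 := LinearMap.mem_ker.mp b.2
      have h2 : a.1.1.2 = b.1.1.2 := by rw [ha2, hb2]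
      exact Subtype.ext (Subtype.ext (Prod.ext h1 h2))
    · rintro ⟨x, hx⟩
      have hx' : ((x, 0) : M × N) ∈ D := hx
      refine ⟨⟨⟨(x, 0), hx'⟩, ?_⟩, rfl⟩
      simp [hf, LinearMap.mem_ker]
  rw [hrange, hkerK] at hrn
  omega

/-- The linear map `V × V* → (V × V*)*` induced by the canonical pairing. -/
noncomputable def pairB {V : Type*} [AddCommGroup V] [Module ℝ V] :
    (V × Module.Dual ℝ V) →ₗ[ℝ] Module.Dual ℝ (V × Module.Dual ℝ V) where
  toFun p :=
    { toFun := fun q => p.2 q.1 + q.2 p.1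
      map_add' := by intro a b; simp; ring
      map_smul' := by intro c a; simp; ring }
  map_add' := by
    intro a b
    refine LinearMap.ext fun q => ?_
    simp; ring
  map_smul' := by
    intro c a
    refine LinearMap.ext fun q => ?_
    simp; ring

lemma pairB_injective {V : Type*} [AddCommGroup V] [Module ℝ V] [FiniteDimensional ℝ V] :
    Function.Injective (pairB (V := V)) := by
  rw [← LinearMap.ker_eq_bot]
  ext p
  simp only [LinearMap.mem_ker, Submodule.mem_bot]
  constructor
  · intro h
    have h2 : ∀ q : V × Module.Dual ℝ V, p.2 q.1 + q.2 p.1 = 0 := by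
      intro q
      have := congrFun (congrArg DFunLike.coe h) q
      simpa [pairB] using this
    have hp2 : p.2 = 0 := by
      ext x
      have := h2 (x, 0)
      simpa using this
    have hp1 : p.1 = 0 := by
      rw [← Module.forall_dual_apply_eq_zero_iff ℝ]
      intro φ
      have := h2 (0, φ)
      simpa using this
    exact Prod.ext hp1 hp2
  · rintro rfl; simp

set_option synthInstance.maxHeartbeats 4000000 in
set_option maxHeartbeats 4000000 in
/-- Let `V` be a finite-dimensional real vector space and
`D ⊆ V ⊕ V*` an isotropic subspace. Let `K = {X ∈ V | (X,0) ∈ D}` and let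
`ρ₂(D) ⊆ V*` be the image of `D` under the projection `(X,ξ) ↦ ξ`. If the annihilator
of `K` in `V*` equals `ρ₂(D)`, then `dim D = dim V` and `D` is maximally isotropic. -/
theorem stmt_8 {V : Type*} [AddCommGroup V] [Module ℝ V] [FiniteDimensional ℝ V]
    (D : Submodule ℝ (V × Module.Dual ℝ V))
    (hiso : D ≤ perp D)
    (hann : (Submodule.comap (LinearMap.inl ℝ V (Module.Dual ℝ V)) D).dualAnnihilator =
      Submodule.map (LinearMap.snd ℝ V (Module.Dual ℝ V)) D) :
    Module.finrank ℝ D = Module.finrank ℝ V ∧ D = perp D := by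
  classical
  have hdim := finrank_eq_map_snd_add_comap_inl D
  have hanndim : Module.finrank ℝ (Submodule.comap (LinearMap.inl ℝ V (Module.Dual ℝ V)) D) +
      Module.finrank ℝ (Submodule.comap (LinearMap.inl ℝ V (Module.Dual ℝ V))
        D).dualAnnihilator = Module.finrank ℝ V := by
    have h1 := Submodule.finrank_quotient_add_finrank
      (Submodule.comap (LinearMap.inl ℝ V (Module.Dual ℝ V)) D)
    have heq : Module.finrank ℝ
        (V ⧸ (Submodule.comap (LinearMap.inl ℝ V (Module.Dual ℝ V)) D)) = Module.finrank ℝ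
        (Submodule.comap (LinearMap.inl ℝ V (Module.Dual ℝ V)) D).dualAnnihilator :=
      LinearEquiv.finrank_eq
        (Subspace.quotEquivAnnihilator (Submodule.comap (LinearMap.inl ℝ V (Module.Dual ℝ V)) D))
    omega
  rw [hann] at hanndim
  have hdimD : Module.finrank ℝ D = Module.finrank ℝ V := by omega
  refine ⟨hdimD, ?_⟩
  -- perp D = comap pairB (dualAnnihilator D)
  have hperp : perp D = Submodule.comap (pairB (V := V)) (Submodule.dualAnnihilator D) := by
    ext p
    simp only [Submodule.mem_comap, Submodule.mem_dualAnnihilator]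
    constructor
    · intro hp q hq
      have := hp q hq
      simpa [pairB, add_comm] using this
    · intro hp q hq
      have := hp q hq
      simp only [pairB, LinearMap.coe_mk, AddHom.coe_mk] at this
      linarith
  -- dimension count
  have hBmap : Module.finrank ℝ (perp D) ≤ Module.finrank ℝ (Submodule.dualAnnihilator D) := by
    rw [hperp]
    have h1 : Module.finrank ℝ (Submodule.comap (pairB (V := V)) (Submodule.dualAnnihilator D))
        = Module.finrank ℝ (Submodule.map (pairB (V := V))
          (Submodule.comap (pairB (V := V)) (Submodule.dualAnnihilator D))) :=
      (Submodule.equivMapOfInjective _ pairB_injective _).finrank_eq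
    rw [h1]
    exact Submodule.finrank_mono (Submodule.map_comap_le _ _)
  have hannD : Module.finrank ℝ D + Module.finrank ℝ (Submodule.dualAnnihilator D)
      = Module.finrank ℝ (V × Module.Dual ℝ V) := by
    have := Submodule.finrank_quotient_add_finrank D
    have heq : Module.finrank ℝ ((V × Module.Dual ℝ V) ⧸ D)
        = Module.finrank ℝ D.dualAnnihilator :=
      LinearEquiv.finrank_eq (Subspace.quotEquivAnnihilator D)
    omega
  have hprod : Module.finrank ℝ (V × Module.Dual ℝ V) = 2 * Module.finrank ℝ V := by
    rw [Module.finrank_prod, Subspace.dual_finrank_eq]; ring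
  have : Module.finrank ℝ (perp D) ≤ Module.finrank ℝ D := by omega
  exact Submodule.eq_of_le_of_finrank_le hiso this
end

section
/- Let g be a Lie algebra over a field k of characteristic ≠ 2, α ∈ k, and r : g → g a linear map satisfying the modified Yang–Baxter identity. Then the r-bracket [X,Y]_r := (1/2)([X,rY] + [rX,Y]) is bilinear, antisymmetric, and satisfies the Jacobi identity [X,[Y,Z]_r]_r + [Y,[Z,X]_r]_r + [Z,[X,Y]_r]_r = 0 for all X, Y, Z ∈ g; hence it defines a second Lie algebra structure g_r on the underlying vector space of g. -/
/-- The `r`-bracket `[X,Y]_r := (1/2)([X, rY] + [rX, Y])` on a Lie algebra `g`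
associated to a linear map `r : g → g`. -/
def rbr {k : Type*} [Field k] {g : Type*} [LieRing g] [LieAlgebra k g]
    (r : g →ₗ[k] g) (X Y : g) : g :=
  (2⁻¹ : k) • (⁅X, r Y⁆ + ⁅r X, Y⁆)

/-- Let `g` be a Lie algebra over a field `k` of characteristic `≠ 2`,
`α ∈ k`, and `r : g → g` a linear map satisfying the modified Yang–Baxter identity.
Then the `r`-bracket `[X,Y]_r := (1/2)([X,rY] + [rX,Y])` is bilinear, antisymmetric,
and satisfies the Jacobi identity; hence it defines a second Lie algebra structure
`g_r` on the underlying vector space of `g`. -/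
theorem stmt_11 {k : Type*} [Field k] (h2 : (2 : k) ≠ 0)
    {g : Type*} [LieRing g] [LieAlgebra k g]
    (α : k) (r : g →ₗ[k] g)
    (hYB : ∀ X Y : g, r ⁅r X, Y⁆ + r ⁅X, r Y⁆ - ⁅r X, r Y⁆ = α • ⁅X, Y⁆) :
    (∀ (a : k) (X X' Y : g),
      rbr r (a • X + X') Y = a • rbr r X Y + rbr r X' Y) ∧
    (∀ (a : k) (X Y Y' : g),
      rbr r X (a • Y + Y') = a • rbr r X Y + rbr r X Y') ∧
    (∀ X Y : g, rbr r X Y = - rbr r Y X) ∧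
    (∀ X Y Z : g,
      rbr r X (rbr r Y Z) + rbr r Y (rbr r Z X) + rbr r Z (rbr r X Y) = 0) := by
  have hr : ∀ Y Z : g, r ((2⁻¹ : k) • (⁅Y, r Z⁆ + ⁅r Y, Z⁆))
      = (2⁻¹ : k) • (⁅r Y, r Z⁆ + α • ⁅Y, Z⁆) := by
    intro Y Z
    have h := hYB Y Z
    simp only [map_smul, map_add]
    rw [show r ⁅Y, r Z⁆ + r ⁅r Y, Z⁆ = ⁅r Y, r Z⁆ + α • ⁅Y, Z⁆ by
      linear_combination (norm := module) h]
  refine ⟨?_, ?_, ?_, ?_⟩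
  · intro a X X' Y
    simp only [rbr, map_add, map_smul, add_lie, smul_lie, lie_add, lie_smul]
    module
  · intro a X Y Y'
    simp only [rbr, map_add, map_smul, add_lie, smul_lie, lie_add, lie_smul]
    module
  · intro X Y
    simp only [rbr]
    rw [← lie_skew X (r Y), ← lie_skew (r X) Y]
    module
  · intro X Y Z
    simp only [rbr]
    rw [hr, hr, hr]
    simp only [lie_add, add_lie, lie_smul, smul_lie, smul_add]
    have j0 := lie_jacobi X Y Z
    have j1 := lie_jacobi X (r Y) (r Z)
    have j2 := lie_jacobi Y (r Z) (r X)
    have j3 := lie_jacobi Z (r X) (r Y)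
    linear_combination (norm := module) ((2 : k)⁻¹ * (2 : k)⁻¹ * α) • j0 +
      ((2 : k)⁻¹ * (2 : k)⁻¹) • j1 + ((2 : k)⁻¹ * (2 : k)⁻¹) • j2 +
      ((2 : k)⁻¹ * (2 : k)⁻¹) • j3
end

section
/- Let g be a Lie algebra over a field k of characteristic ≠ 2 and r : g → g a linear map satisfying the modified Yang–Baxter identity with parameter α, and suppose α = β² for some β ∈ k. Set r_± := (1/2)(r ± β·id). Then r_±([X,Y]_r) = [r_± X, r_± Y] for all X, Y ∈ g, i.e. r_+ and r_− are Lie algebra homomorphisms from (g, [·,·]_r) to g. Moreover, if β ≠ 0, the map X ↦ (r_+ X, r_− X) is an injective Lie algebra homomorphism from (g, [·,·]_r) into the direct product Lie algebra g × g. -/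
/-- Let `g` be a Lie algebra over a field `k` of characteristic `≠ 2`
and `r : g → g` a linear map satisfying the modified Yang–Baxter identity with
parameter `α = β²`. Set `r_± := (1/2)(r ± β·id)`. Then
`r_± [X,Y]_r = [r_± X, r_± Y]` for all `X, Y ∈ g`, i.e. `r_+` and `r_−` are Lie
algebra homomorphisms from `(g, [·,·]_r)` to `g`. Moreover, if `β ≠ 0`, the map
`X ↦ (r_+ X, r_− X)` is an injective Lie algebra homomorphism from `(g, [·,·]_r)`
into the direct product Lie algebra `g × g`. -/
theorem stmt_12 {k : Type*} [Field k] (h2 : (2 : k) ≠ 0)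
    {g : Type*} [LieRing g] [LieAlgebra k g]
    (α β : k) (hβ : α = β * β) (r : g →ₗ[k] g)
    (hYB : ∀ X Y : g, r ⁅r X, Y⁆ + r ⁅X, r Y⁆ - ⁅r X, r Y⁆ = α • ⁅X, Y⁆) :
    (∀ X Y : g,
      (2⁻¹ : k) • (r (rbr r X Y) + β • rbr r X Y) =
        ⁅(2⁻¹ : k) • (r X + β • X), (2⁻¹ : k) • (r Y + β • Y)⁆) ∧
    (∀ X Y : g,
      (2⁻¹ : k) • (r (rbr r X Y) - β • rbr r X Y) =
        ⁅(2⁻¹ : k) • (r X - β • X), (2⁻¹ : k) • (r Y - β • Y)⁆) ∧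
    (β ≠ 0 → Function.Injective (fun X : g =>
      ((2⁻¹ : k) • (r X + β • X), (2⁻¹ : k) • (r X - β • X)))) := by
  have key : ∀ X Y : g, r ⁅X, r Y⁆ = ⁅r X, r Y⁆ + (β * β) • ⁅X, Y⁆ - r ⁅r X, Y⁆ := by
    intro X Y
    have h := hYB X Y
    rw [hβ] at h
    linear_combination (norm := module) h
  refine ⟨?_, ?_, ?_⟩
  · intro X Y
    simp only [rbr, map_smul, map_add, key, lie_add, add_lie, lie_smul, smul_lie, smul_add,
      smul_sub, smul_smul]
    module
  · intro X Y
    simp only [rbr, map_smul, map_add, key, lie_add, add_lie, sub_lie, lie_sub, lie_smul,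
      smul_lie, smul_add, smul_sub, smul_smul]
    module
  · intro hb X Y h
    simp only [Prod.mk.injEq] at h
    obtain ⟨h1, h3⟩ := h
    have h5 : β • X = β • Y := by
      have h6 : (2 * 2⁻¹ * β : k) • X = (2 * 2⁻¹ * β : k) • Y := by
        linear_combination (norm := module) h1 - h3
      rwa [mul_inv_cancel₀ h2, one_mul] at h6
    exact smul_right_injective g hb h5
end

section
/- Let g be a Lie algebra over a field k of characteristic ≠ 2 and r : g → g a linear map satisfying the modified Yang–Baxter identity with parameter α ∈ k. Define on g × g the double bracket [(X,Y),(X',Y')]_d := ([X,X'] + (1/2)([X,rY'] + [rY,X'] + r[Y',X] + r[X',Y]), [X,Y'] + [Y,X'] + [Y,Y']_r) and the bracket [(X,Y),(X',Y')]_α := ([X,X'] + α[Y,Y'], [X,Y'] + [Y,X']). Then the linear map Φ(X,Y) := (X + (1/2)rY, (1/2)Y) is bijective and satisfies Φ([(X,Y),(X',Y')]_d) = [Φ(X,Y), Φ(X',Y')]_α for all X, Y, X', Y' ∈ g; in particular [·,·]_d is a Lie bracket on g × g and (g × g, [·,·]_d) is isomorphic as a Lie algebra to (g × g, [·,·]_α).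 -/
/-- The bracket `[(X,Y),(X',Y')]_α := ([X,X'] + α[Y,Y'], [X,Y'] + [Y,X'])` on `g × g`. -/
def abr {k : Type*} [CommRing k] {g : Type*} [LieRing g] [LieAlgebra k g]
    (α : k) (p q : g × g) : g × g :=
  (⁅p.1, q.1⁆ + α • ⁅p.2, q.2⁆, ⁅p.1, q.2⁆ + ⁅p.2, q.1⁆)

/-- The double bracket
`[(X,Y),(X',Y')]_d := ([X,X'] + (1/2)([X,rY'] + [rY,X'] + r[Y',X] + r[X',Y]),
[X,Y'] + [Y,X'] + [Y,Y']_r)` on `g × g`. -/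
def dbr {k : Type*} [Field k] {g : Type*} [LieRing g] [LieAlgebra k g]
    (r : g →ₗ[k] g) (p q : g × g) : g × g :=
  (⁅p.1, q.1⁆ + (2⁻¹ : k) • (⁅p.1, r q.2⁆ + ⁅r p.2, q.1⁆ + r ⁅q.2, p.1⁆ + r ⁅q.1, p.2⁆),
   ⁅p.1, q.2⁆ + ⁅p.2, q.1⁆ + rbr r p.2 q.2)


private lemma abr_jacobi' {k : Type*} [Field k] {g : Type*} [LieRing g] [LieAlgebra k g]
    (α : k) (a b c : g × g) :
    abr α a (abr α b c) + abr α b (abr α c a) + abr α c (abr α a b) = 0 := by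
  simp only [abr, Prod.mk_add_mk, Prod.mk.injEq, Prod.ext_iff, Prod.fst_add, Prod.snd_add,
    lie_add, add_lie, lie_smul, smul_lie, Prod.fst_zero, Prod.snd_zero]
  constructor
  · linear_combination (norm := module) lie_jacobi a.1 b.1 c.1 + α • lie_jacobi a.1 b.2 c.2 +
      α • lie_jacobi a.2 b.1 c.2 + α • lie_jacobi a.2 b.2 c.1
  · linear_combination (norm := module) lie_jacobi a.1 b.1 c.2 + lie_jacobi a.1 b.2 c.1 +
      lie_jacobi a.2 b.1 c.1 + α • lie_jacobi a.2 b.2 c.2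

/-- Let `g` be a Lie algebra over a field `k` of characteristic `≠ 2`
and `r : g → g` a linear map satisfying the modified Yang–Baxter identity with
parameter `α ∈ k`. Then the linear map `Φ(X,Y) := (X + (1/2) r Y, (1/2) Y)` is
bijective and intertwines the double bracket `[·,·]_d` with the bracket `[·,·]_α`;
in particular `[·,·]_d` is a Lie bracket on `g × g` and `(g × g, [·,·]_d)` is
isomorphic as a Lie algebra to `(g × g, [·,·]_α)`. -/
theorem stmt_14 {k : Type*} [Field k] (h2 : (2 : k) ≠ 0)
    {g : Type*} [LieRing g] [LieAlgebra k g]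
    (α : k) (r : g →ₗ[k] g)
    (hYB : ∀ X Y : g, r ⁅r X, Y⁆ + r ⁅X, r Y⁆ - ⁅r X, r Y⁆ = α • ⁅X, Y⁆) :
    Function.Bijective
      (fun p : g × g => (p.1 + (2⁻¹ : k) • r p.2, (2⁻¹ : k) • p.2)) ∧
    (∀ p q : g × g,
      ((dbr r p q).1 + (2⁻¹ : k) • r (dbr r p q).2, (2⁻¹ : k) • (dbr r p q).2) =
        abr α (p.1 + (2⁻¹ : k) • r p.2, (2⁻¹ : k) • p.2)
          (q.1 + (2⁻¹ : k) • r q.2, (2⁻¹ : k) • q.2)) ∧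
    (∀ p q : g × g, dbr r p q = - dbr r q p) ∧
    (∀ p q s : g × g,
      dbr r p (dbr r q s) + dbr r q (dbr r s p) + dbr r s (dbr r p q) = 0) := by
  have hr : ∀ X Y : g, r ⁅X, Y⁆ = - r ⁅Y, X⁆ := fun X Y => by rw [← lie_skew, map_neg]
  set Φ : g × g → g × g := fun p => (p.1 + (2⁻¹ : k) • r p.2, (2⁻¹ : k) • p.2) with hΦ
  have hbij : Function.Bijective Φ := by
    refine Function.bijective_iff_has_inverse.2
      ⟨fun q => (q.1 - r q.2, (2 : k) • q.2), fun p => ?_, fun q => ?_⟩ <;>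
      simp [hΦ, Prod.ext_iff, map_smul, smul_smul, inv_mul_cancel₀ h2, mul_inv_cancel₀ h2,
        smul_add, sub_add_eq_add_sub]
  have hcomm : ∀ p q : g × g, Φ (dbr r p q) = abr α (Φ p) (Φ q) := by
    intro p q
    simp only [hΦ, dbr, rbr, abr, Prod.mk.injEq]
    constructor
    · simp only [map_add, map_smul, lie_add, add_lie, lie_smul, smul_lie]
      linear_combination (norm := module) (2⁻¹ : k) • (hr q.2 p.1 + hr q.1 p.2) +
        ((2⁻¹ * 2⁻¹ : k)) • hYB p.2 q.2
    · simp only [lie_add, add_lie, lie_smul, smul_lie]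
      module
  refine ⟨hbij, hcomm, ?_, ?_⟩
  · intro p q
    simp only [dbr, rbr, Prod.neg_mk, Prod.mk.injEq]
    constructor
    · linear_combination (norm := module) (-1 : k) • lie_skew q.1 p.1 +
        (-(2⁻¹ : k)) • (lie_skew (r q.2) p.1 + lie_skew q.1 (r p.2)) +
        ((2⁻¹ : k)) • (hr q.2 p.1 + hr q.1 p.2)
    · linear_combination (norm := module) (-1 : k) • (lie_skew q.2 p.1 + lie_skew q.1 p.2) +
        (-(2⁻¹ : k)) • (lie_skew (r q.2) p.2 + lie_skew q.2 (r p.2))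
  · intro p q s
    have hadd : ∀ a b : g × g, Φ (a + b) = Φ a + Φ b := by
      intro a b
      simp [hΦ, Prod.ext_iff, smul_add, map_add]
      abel
    have h0 : Φ (0 : g × g) = 0 := by simp [hΦ]
    apply hbij.injective
    simp only [hadd, h0, hcomm]
    exact abr_jacobi' α (Φ p) (Φ q) (Φ s)
end

section
/- Let V be a finite-dimensional real vector space, Π : V* → V an antisymmetric linear map, and b : V → V* an antisymmetric linear map (a 2-form). If the map id + b∘Π : V* → V* is invertible, then Π_b := Π∘(id + b∘Π)⁻¹ is again antisymmetric, and the b-transform of the graph of Π is the graph of Π_b: e^b(L_Π) = L_{Π_b}, where e^b(X,ξ) = (X, ξ + bX). -/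
/-- Let `V` be a finite-dimensional real vector space,
`Π : V* → V` an antisymmetric linear map, and `b : V → V*` an antisymmetric linear
map (a 2-form). If `id + b∘Π : V* → V*` is invertible (with two-sided inverse `σ`),
then `Π_b := Π ∘ (id + b∘Π)⁻¹ = Π ∘ σ` is again antisymmetric, and the `b`-transform
`e^b(X,ξ) = (X, ξ + bX)` maps the graph of `Π` onto the graph of `Π_b`. -/
theorem stmt_16 (V : Type*) [AddCommGroup V] [Module ℝ V] [FiniteDimensional ℝ V]
    (Pi0 : Module.Dual ℝ V →ₗ[ℝ] V)
    (hPi0 : ∀ ξ η : Module.Dual ℝ V, ξ (Pi0 η) = - η (Pi0 ξ))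
    (b : V →ₗ[ℝ] Module.Dual ℝ V)
    (hb : ∀ X Y : V, b X Y = - b Y X)
    (σ : Module.Dual ℝ V →ₗ[ℝ] Module.Dual ℝ V)
    (hσ1 : (LinearMap.id + b ∘ₗ Pi0) ∘ₗ σ = LinearMap.id)
    (hσ2 : σ ∘ₗ (LinearMap.id + b ∘ₗ Pi0) = LinearMap.id) :
    (∀ ξ η : Module.Dual ℝ V, ξ ((Pi0 ∘ₗ σ) η) = - η ((Pi0 ∘ₗ σ) ξ)) ∧
    (fun p : V × Module.Dual ℝ V => (p.1, p.2 + b p.1)) ''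
        {p : V × Module.Dual ℝ V | ∃ ξ, p = (Pi0 ξ, ξ)} =
      {p : V × Module.Dual ℝ V | ∃ ξ, p = ((Pi0 ∘ₗ σ) ξ, ξ)} := by
  have hA1 : ∀ ξ : Module.Dual ℝ V, σ ξ + b (Pi0 (σ ξ)) = ξ := by
    intro ξ
    have := congrArg (fun f => f ξ) hσ1
    simpa [LinearMap.comp_apply, LinearMap.add_apply] using this
  have hA2 : ∀ ξ : Module.Dual ℝ V, σ (ξ + b (Pi0 ξ)) = ξ := by
    intro ξ
    have := congrArg (fun f => f ξ) hσ2
    simpa [LinearMap.comp_apply, LinearMap.add_apply] using this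
  constructor
  · intro ξ η
    have h1 : ξ ((Pi0 ∘ₗ σ) η)
        = (σ ξ) (Pi0 (σ η)) + b (Pi0 (σ ξ)) (Pi0 (σ η)) := by
      conv_lhs => rw [← hA1 ξ]
      rfl
    have h2 : η ((Pi0 ∘ₗ σ) ξ)
        = (σ η) (Pi0 (σ ξ)) + b (Pi0 (σ η)) (Pi0 (σ ξ)) := by
      conv_lhs => rw [← hA1 η]
      rfl
    rw [h1, h2, hPi0 (σ ξ) (σ η), hb]
    ring
  · ext p
    constructor
    · rintro ⟨q, ⟨ξ, rfl⟩, rfl⟩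
      exact ⟨ξ + b (Pi0 ξ), by simp [LinearMap.comp_apply, hA2 ξ]⟩
    · rintro ⟨η, rfl⟩
      refine ⟨(Pi0 (σ η), σ η), ⟨σ η, rfl⟩, ?_⟩
      simp [LinearMap.comp_apply, hA1 η]
end
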